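/- The integral of 1/√Δ(t) over the octahedron 𝒪 = {t : |t₁₁|+|t₂₂|+|t₃₃| ≤ 1} equals (4−π)π, where Δ(t) = ((t₁₁+t₂₂)² − (1−t₃₃)²)·((t₁₁−t₂₂)² − (1+t₃₃)²); consequently the ratio of the separable to the total quantum Fisher volume is (4−π)/π. -/

import Mathlib

open MeasureTheory Real

def octa : Set (Fin 3 → ℝ) := {t | |t 0| + |t 1| + |t 2| ≤ 1}

/-- `Δ(t) = ((t₁₁+t₂₂)² − (1−t₃₃)²)((t₁₁−t₂₂)² − (1+t₃₃)²)`. -/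
noncomputable def deltaFun (t : Fin 3 → ℝ) : ℝ :=
  ((t 0 + t 1)^2 - (1 - t 2)^2) * ((t 0 - t 1)^2 - (1 + t 2)^2)

/-! In the coordinates `u = t₀ + t₁`, `v = t₀ - t₁` (Jacobian `1/2`) the slice of the
octahedron at height `w = t₂` is the square `|u|, |v| ≤ 1 - |w|`, and `Δ` splits as
`((1 - w)² - u²)((1 + w)² - v²)`. Since `∫_{-r}^{r} (a² - u²)^{-1/2} du = 2 arcsin (r / a)`, the
slice contributes `π arcsin ((1 - |w|) / (1 + |w|))`. An antiderivative of
`arcsin ((1 - c) / (1 + c))` is `(1 + c) arcsin ((1 - c) / (1 + c)) + 2 √c`, so integrating over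
`w ∈ [-1, 1]` gives `2π (2 - π / 2) = (4 - π) π`. -/

open Set
open scoped ENNReal

theorem hasDerivAt_arcsin_div {a x : ℝ} (hx : |x| < a) :
    HasDerivAt (fun u => arcsin (u / a)) (1 / √(a ^ 2 - x ^ 2)) x := by
  obtain ⟨hxl, hxr⟩ := abs_lt.1 hx
  have ha : 0 < a := (abs_nonneg x).trans_lt hx
  have hd := (hasDerivAt_arcsin (x := x / a) (by rw [ne_eq, div_eq_iff ha.ne']; linarith)
    (by rw [ne_eq, div_eq_iff ha.ne']; linarith)).comp x ((hasDerivAt_id' x).div_const a)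
  refine hd.congr_deriv ?_
  have hs : √(1 - (x / a) ^ 2) = √(a ^ 2 - x ^ 2) / a := by
    rw [show 1 - (x / a) ^ 2 = (a ^ 2 - x ^ 2) / a ^ 2 by field_simp, sqrt_div' _ (by positivity),
      sqrt_sq ha.le]
  rw [hs]
  field_simp

theorem setLIntegral_Icc_one_div_sqrt_sq_sub_sq {a r : ℝ} (hr : 0 ≤ r) (hra : r ≤ a) :
    ∫⁻ u in Icc (-r) r, ENNReal.ofReal (1 / √(a ^ 2 - u ^ 2)) =
      ENNReal.ofReal (2 * arcsin (r / a)) := by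
  have hderiv : ∀ x ∈ Ioo (-r) r, HasDerivAt (fun u => arcsin (u / a)) (1 / √(a ^ 2 - x ^ 2)) x :=
    fun x hx => hasDerivAt_arcsin_div (abs_lt.2 ⟨by linarith [hx.1], by linarith [hx.2]⟩)
  have hcont : ContinuousOn (fun u => arcsin (u / a)) (Icc (-r) r) := by fun_prop
  have hint : IntegrableOn (fun u => 1 / √(a ^ 2 - u ^ 2)) (Ioc (-r) r) :=
    intervalIntegral.integrableOn_deriv_of_nonneg hcont hderiv fun _ _ => by positivity
  rw [setLIntegral_congr Ioc_ae_eq_Icc.symm,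
    ← ofReal_integral_eq_lintegral_ofReal hint (ae_of_all _ fun _ => by positivity),
    ← intervalIntegral.integral_of_le (by linarith),
    intervalIntegral.integral_eq_sub_of_hasDerivAt_of_le (by linarith) hcont hderiv
      ((intervalIntegrable_iff_integrableOn_Ioc_of_le (by linarith)).2 hint)]
  rw [neg_div, arcsin_neg, sub_neg_eq_add, ← two_mul]

theorem hasDerivAt_arcsin_one_sub_div_one_add {c : ℝ} (hc : 0 < c) :
    HasDerivAt (fun c => arcsin ((1 - c) / (1 + c))) (-1 / ((1 + c) * √c)) c := by
  have h1c : 0 < 1 + c := by linarith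
  have hds : HasDerivAt (fun c : ℝ => (1 - c) / (1 + c)) (-2 / (1 + c) ^ 2) c := by
    refine (((hasDerivAt_id' c).const_sub 1).div ((hasDerivAt_id' c).const_add 1)
      h1c.ne').congr_deriv ?_
    field_simp; ring
  have hd := (hasDerivAt_arcsin (x := (1 - c) / (1 + c))
    (by rw [ne_eq, div_eq_iff h1c.ne']; linarith)
    (by rw [ne_eq, div_eq_iff h1c.ne']; linarith)).comp c hds
  refine hd.congr_deriv ?_
  have hs : √(1 - ((1 - c) / (1 + c)) ^ 2) = 2 * √c / (1 + c) := by
    rw [show 1 - ((1 - c) / (1 + c)) ^ 2 = (2 * √c / (1 + c)) ^ 2 by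
      field_simp; rw [sq_sqrt hc.le]; ring, sqrt_sq (by positivity)]
  rw [hs]
  field_simp

theorem integral_arcsin_one_sub_div_one_add :
    ∫ c in (0 : ℝ)..1, arcsin ((1 - c) / (1 + c)) = 2 - π / 2 := by
  have hcont : ContinuousOn (fun c : ℝ => arcsin ((1 - c) / (1 + c))) (Icc 0 1) :=
    continuous_arcsin.comp_continuousOn
      ((continuousOn_const.sub continuousOn_id).div (continuousOn_const.add continuousOn_id)
        fun c hc => by linarith [hc.1])
  rw [intervalIntegral.integral_eq_sub_of_hasDerivAt_of_le (f := fun c =>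
      (1 + c) * arcsin ((1 - c) / (1 + c)) + 2 * √c) zero_le_one
      (((continuousOn_const.add continuousOn_id).mul hcont).add (by fun_prop))
      (fun c hc => ?_) (hcont.intervalIntegrable_of_Icc zero_le_one)]
  · norm_num
  · have h1c : 0 < 1 + c := by linarith [hc.1]
    refine ((((hasDerivAt_id' c).const_add 1).mul
      (hasDerivAt_arcsin_one_sub_div_one_add hc.1)).add
      ((hasDerivAt_sqrt hc.1.ne').const_mul 2)).congr_deriv ?_
    field_simp
    ring

theorem continuous_arcsin_one_sub_abs_div_one_add_abs :
    Continuous fun w : ℝ => arcsin ((1 - |w|) / (1 + |w|)) :=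
  continuous_arcsin.comp ((continuous_const.sub continuous_abs).div
    (continuous_const.add continuous_abs) fun w => by positivity)

theorem integral_arcsin_one_sub_abs_div_one_add_abs :
    ∫ w in (-1 : ℝ)..1, arcsin ((1 - |w|) / (1 + |w|)) = 4 - π := by
  have hcont := continuous_arcsin_one_sub_abs_div_one_add_abs
  have hpos : ∫ w in (0 : ℝ)..1, arcsin ((1 - |w|) / (1 + |w|)) = 2 - π / 2 := by
    rw [← integral_arcsin_one_sub_div_one_add]
    refine intervalIntegral.integral_congr fun w hw => ?_
    rw [uIcc_of_le zero_le_one] at hw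
    simp only [abs_of_nonneg hw.1]
  have hneg : ∫ w in (-1 : ℝ)..0, arcsin ((1 - |w|) / (1 + |w|)) = 2 - π / 2 := by
    have h := intervalIntegral.integral_comp_neg (a := 0) (b := 1)
      fun w : ℝ => arcsin ((1 - |w|) / (1 + |w|))
    simp only [abs_neg, neg_zero] at h
    rw [← h, hpos]
  rw [← intervalIntegral.integral_add_adjacent_intervals (hcont.intervalIntegrable (-1) 0)
    (hcont.intervalIntegrable 0 1), hneg, hpos]
  ring

theorem arcsin_mul_arcsin_of_abs_le_one {w : ℝ} (hw : |w| ≤ 1) :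
    arcsin ((1 - |w|) / (1 - w)) * arcsin ((1 - |w|) / (1 + w)) =
      π / 2 * arcsin ((1 - |w|) / (1 + |w|)) := by
  rcases le_total 0 w with hw0 | hw0
  · rw [abs_of_nonneg hw0] at hw ⊢
    rcases hw.eq_or_lt with rfl | hw1
    · simp
    · rw [div_self (by linarith), arcsin_one]
  · rw [abs_of_nonpos hw0] at hw ⊢
    rcases (neg_le.1 hw).eq_or_lt with h | hw1
    · obtain rfl : w = -1 := by linarith
      simp
    · rw [sub_neg_eq_add, div_self (by linarith), arcsin_one, mul_comm, ← sub_eq_add_neg]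

theorem lintegral_eq_inv_two_mul_lintegral_comp_half_add_half_sub {f : ℝ × ℝ → ℝ≥0∞}
    (hf : Measurable f) :
    ∫⁻ q, f q = 2⁻¹ * ∫⁻ q : ℝ × ℝ, f ((q.1 + q.2) / 2, (q.1 - q.2) / 2) := by
  set L := Matrix.toLin (Module.Basis.finTwoProd ℝ) (Module.Basis.finTwoProd ℝ)
    !![(1 / 2 : ℝ), 1 / 2; 1 / 2, -1 / 2]
  have hL (q : ℝ × ℝ) : L q = ((q.1 + q.2) / 2, (q.1 - q.2) / 2) := by
    simp only [L, Matrix.toLin_finTwoProd_apply]; ext <;> simp <;> ring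
  have hdet : LinearMap.det L = -1 / 2 := by
    simp only [L, LinearMap.det_toLin, Matrix.det_fin_two_of]; norm_num
  have hmap := Measure.map_linearMap_addHaar_eq_smul_addHaar (volume : Measure (ℝ × ℝ))
    (f := L) (by rw [hdet]; norm_num)
  simp_rw [← hL]
  rw [← lintegral_map hf L.continuous_of_finiteDimensional.measurable, hmap,
    lintegral_smul_measure, hdet, smul_eq_mul, ← mul_assoc]
  norm_num [ENNReal.inv_mul_cancel]

theorem lintegral_fin_three {f : (Fin 3 → ℝ) → ℝ≥0∞} (hf : Measurable f) :
    ∫⁻ t, f t = ∫⁻ w, ∫⁻ q : ℝ × ℝ, f ![q.1, q.2, w] := by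
  set e := (MeasurableEquiv.piFinSuccAbove (fun _ : Fin 3 => ℝ) 2).trans
    (MeasurableEquiv.prodCongr (MeasurableEquiv.refl ℝ) MeasurableEquiv.finTwoArrow)
  have he : MeasurePreserving e volume (volume.prod volume) :=
    ((MeasurePreserving.id volume).prod (volume_preserving_finTwoArrow ℝ)).comp
      (volume_preserving_piFinSuccAbove (fun _ : Fin 3 => ℝ) 2)
  have he_symm (w : ℝ) (q : ℝ × ℝ) : e.symm (w, q) = ![q.1, q.2, w] := by
    ext i; fin_cases i <;> rfl
  rw [← he.symm.lintegral_comp_emb e.symm.measurableEmbedding,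
    lintegral_prod (fun p => f (e.symm p)) (hf.comp e.symm.measurable).aemeasurable]
  simp only [he_symm]

theorem measurableSet_octa : MeasurableSet octa :=
  measurableSet_le (by fun_prop) measurable_const

noncomputable def fisherDensity (t : Fin 3 → ℝ) : ℝ≥0∞ :=
  ENNReal.ofReal (1 / √(deltaFun t))

theorem measurable_fisherDensity : Measurable fisherDensity := by
  unfold fisherDensity deltaFun; fun_prop

theorem abs_half_add_add_abs_half_sub (u v : ℝ) :
    |(u + v) / 2| + |(u - v) / 2| = max |u| |v| := by
  grind

theorem octa_indicator_fisherDensity_half_add_half_sub (u v w : ℝ) :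
    octa.indicator fisherDensity ![(u + v) / 2, (u - v) / 2, w] =
      (Icc (-(1 - |w|)) (1 - |w|)).indicator
          (fun u => ENNReal.ofReal (1 / √((1 - w) ^ 2 - u ^ 2))) u *
        (Icc (-(1 - |w|)) (1 - |w|)).indicator
          (fun v => ENNReal.ofReal (1 / √((1 + w) ^ 2 - v ^ 2))) v := by
  set r := 1 - |w|
  have hmem : ![(u + v) / 2, (u - v) / 2, w] ∈ octa ↔ u ∈ Icc (-r) r ∧ v ∈ Icc (-r) r := by
    simp only [octa, mem_ofPred_eq, Matrix.cons_val, abs_half_add_add_abs_half_sub, mem_Icc,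
      ← abs_le]
    constructor
    · intro h; constructor <;> linarith [le_max_left |u| |v|, le_max_right |u| |v|]
    · intro h; linarith [max_le h.1 h.2]
  by_cases h : u ∈ Icc (-r) r ∧ v ∈ Icc (-r) r
  · have hu : 0 ≤ (1 - w) ^ 2 - u ^ 2 := sub_nonneg.2
      (sq_le_sq' (by linarith [h.1.1, le_abs_self w]) (by linarith [h.1.2, le_abs_self w]))
    have hΔ : deltaFun ![(u + v) / 2, (u - v) / 2, w] =
        ((1 - w) ^ 2 - u ^ 2) * ((1 + w) ^ 2 - v ^ 2) := by
      simp only [deltaFun, Matrix.cons_val]; ring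
    rw [indicator_of_mem (hmem.2 h), indicator_of_mem h.1, indicator_of_mem h.2, fisherDensity,
      hΔ, sqrt_mul hu, ← ENNReal.ofReal_mul (by positivity), one_div_mul_one_div]
  · rw [indicator_of_notMem (mt hmem.1 h)]
    rcases not_and_or.1 h with h | h <;> simp [h]

theorem lintegral_octa_indicator_fisherDensity_slice (w : ℝ) :
    ∫⁻ q : ℝ × ℝ, octa.indicator fisherDensity ![q.1, q.2, w] =
      (Icc (-1) 1).indicator (fun w => ENNReal.ofReal (π * arcsin ((1 - |w|) / (1 + |w|)))) w := by
  rw [lintegral_eq_inv_two_mul_lintegral_comp_half_add_half_sub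
      (f := fun q => octa.indicator fisherDensity ![q.1, q.2, w])
      ((measurable_fisherDensity.indicator measurableSet_octa).comp (by fun_prop))]
  simp only [octa_indicator_fisherDensity_half_add_half_sub]
  rw [Measure.volume_eq_prod, lintegral_prod_mul
    (Measurable.indicator (by fun_prop) measurableSet_Icc).aemeasurable
    (Measurable.indicator (by fun_prop) measurableSet_Icc).aemeasurable,
    lintegral_indicator measurableSet_Icc, lintegral_indicator measurableSet_Icc]
  by_cases hw : |w| ≤ 1
  · have hA : 0 ≤ arcsin ((1 - |w|) / (1 - w)) :=
      arcsin_nonneg.2 (div_nonneg (by linarith) (by linarith [le_abs_self w]))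
    rw [setLIntegral_Icc_one_div_sqrt_sq_sub_sq (by linarith) (by linarith [le_abs_self w]),
      setLIntegral_Icc_one_div_sqrt_sq_sub_sq (by linarith) (by linarith [neg_abs_le w]),
      indicator_of_mem (mem_Icc.2 (abs_le.1 hw)), ← mul_assoc, ← ENNReal.ofReal_ofNat 2,
      ← ENNReal.ofReal_inv_of_pos two_pos, ← ENNReal.ofReal_mul (by norm_num),
      ← ENNReal.ofReal_mul (by positivity)]
    congr 1
    linear_combination 2 * arcsin_mul_arcsin_of_abs_le_one hw
  · rw [Icc_eq_empty (by linarith), indicator_of_notMem fun h => hw (abs_le.2 (mem_Icc.1 h))]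
    simp

theorem setLIntegral_octa_fisherDensity :
    ∫⁻ t in octa, fisherDensity t = ENNReal.ofReal ((4 - π) * π) := by
  have hcont := continuous_arcsin_one_sub_abs_div_one_add_abs.const_mul π
  rw [← lintegral_indicator measurableSet_octa,
    lintegral_fin_three (measurable_fisherDensity.indicator measurableSet_octa)]
  simp only [lintegral_octa_indicator_fisherDensity_slice]
  rw [lintegral_indicator measurableSet_Icc, ← ofReal_integral_eq_lintegral_ofReal
      hcont.integrableOn_Icc (ae_restrict_of_forall_mem measurableSet_Icc fun w hw => ?_),
    integral_Icc_eq_integral_Ioc, ← intervalIntegral.integral_of_le (by norm_num),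
    intervalIntegral.integral_const_mul, integral_arcsin_one_sub_abs_div_one_add_abs, mul_comm]
  exact mul_nonneg pi_pos.le
    (arcsin_nonneg.2 (div_nonneg (by linarith [abs_le.2 hw]) (by positivity)))

/-- The quantum Fisher volume of separable two-qubit states with maximally disordered
subsystems: `∫_𝒪 Δ(t)^{-1/2} dt = (4−π)π`; consequently the ratio of the separable
to the total quantum Fisher volume `π²` is `(4−π)/π`. -/
theorem quantum_fisher_volume_octa :
    (∫ t in octa, 1 / Real.sqrt (deltaFun t) = (4 - π) * π) ∧
    ((4 - π) * π / π ^ 2 = (4 - π) / π) := by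
  refine ⟨?_, by field_simp⟩
  rw [integral_eq_lintegral_of_nonneg_ae (ae_of_all _ fun _ => by positivity)
    (Measurable.aestronglyMeasurable (by unfold deltaFun; fun_prop))]
  change (∫⁻ t in octa, fisherDensity t).toReal = _
  rw [setLIntegral_octa_fisherDensity,
    ENNReal.toReal_ofReal (mul_nonneg (by linarith [pi_le_four]) pi_pos.le)]
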